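/- Let ℰ be a non-abelian extension of 𝒜 by ℬ with section (𝔰,s) and induced non-abelian 2-cocycle (ω,ϖ,χ,μ,ρ_B,ρ_M). A pair (α,β) ∈ Aut(𝒜) × Aut(ℬ), with α = (α₁,α₂), β = (β₁,β₂), is inducible (lies in the image of K) if and only if there exist linear maps ζ: A → B and η: V → M such that for all x,y ∈ A, a ∈ B, v ∈ V, m ∈ M: (1) β₁ω(x,y) − ω(α₁x,α₁y) = ρ_B(α₁x)ζ(y) − ρ_B(α₁y)ζ(x) − ζ[x,y]_A + [ζ(x),ζ(y)]_B; (2) β₁(ρ_B(x)a) − ρ_B(α₁x)β₁(a) = [ζ(x),β₁(a)]_B; (3) β₂(ρ_M(x)m) − ρ_M(α₁x)β₂(m) = ν_M(ζ(x))β₂(m); (4) β₂(μ(v)a) − μ(α₂v)β₁(a) = −ν_M(β₁(a))η(v); (5) β₂ϖ(x,v) − ϖ(α₁x,α₂v) = ν_M(ζ(x))η(v) − μ(α₂v)ζ(x) + ρ_M(α₁x)η(v) − η(ρ(x)v); (6) β₁χ(v) − χ(α₂v) = Sη(v) − ζT(v). -/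
import Mathlib


universe u

section
variable (K : Type u) [Field K]

/-- A relative Rota-Baxter Lie algebra: a Lie algebra `A`, a representation `rep` of `A`
on `V`, and a relative Rota-Baxter operator `T : V → A`. -/
structure RelRB (A V : Type u) [AddCommGroup A] [Module K A]
    [AddCommGroup V] [Module K V] : Type u where
  br : A →ₗ[K] A →ₗ[K] A
  skew : ∀ x y, br x y + br y x = 0
  jacobi : ∀ x y z, br x (br y z) = br (br x y) z + br y (br x z)
  rep : A →ₗ[K] Module.End K V
  rep_br : ∀ x y, rep (br x y) = rep x * rep y - rep y * rep x
  T : V →ₗ[K] A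
  rb : ∀ u v, br (T u) (T v) = T (rep (T u) v - rep (T v) u)

variable {A V B M : Type u}
  [AddCommGroup A] [Module K A] [AddCommGroup V] [Module K V]
  [AddCommGroup B] [Module K B] [AddCommGroup M] [Module K M]

/-- A non-abelian extension of `𝒜` by `ℬ`: a relative Rota-Baxter Lie algebra `ℰ`
together with a short exact sequence `0 → ℬ → ℰ → 𝒜 → 0` of relative Rota-Baxter Lie
algebras. -/
structure ExtData {Ah Vh : Type u} [AddCommGroup Ah] [Module K Ah]
    [AddCommGroup Vh] [Module K Vh]
    (𝒜 : RelRB K A V) (ℬ : RelRB K B M) (ℰ : RelRB K Ah Vh) : Type u where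
  iB : B →ₗ[K] Ah
  iM : M →ₗ[K] Vh
  pA : Ah →ₗ[K] A
  pV : Vh →ₗ[K] V
  iB_br : ∀ a b, iB (ℬ.br a b) = ℰ.br (iB a) (iB b)
  iB_T : ∀ m, iB (ℬ.T m) = ℰ.T (iM m)
  i_rep : ∀ a m, iM (ℬ.rep a m) = ℰ.rep (iB a) (iM m)
  pA_br : ∀ x y, pA (ℰ.br x y) = 𝒜.br (pA x) (pA y)
  p_T : ∀ vh, pA (ℰ.T vh) = 𝒜.T (pV vh)
  p_rep : ∀ x vh, pV (ℰ.rep x vh) = 𝒜.rep (pA x) (pV vh)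
  iB_inj : Function.Injective iB
  iM_inj : Function.Injective iM
  pA_surj : Function.Surjective pA
  pV_surj : Function.Surjective pV
  exactA : ∀ x, pA x = 0 ↔ x ∈ Set.range iB
  exactV : ∀ v, pV v = 0 ↔ v ∈ Set.range iM
/-- The non-abelian 2-cocycle induced by a section `(sA, sV)` of a non-abelian extension:
`iB (ω x y) = [sA x, sA y] - sA [x,y]`, `iM (ϖ x v) = ρ̂(sA x)(sV v) - sV (ρ(x)v)`,
`iB (χ v) = T̂(sV v) - sA (T v)`, `iM (μ v a) = -ρ̂(iB a)(sV v)`,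
`iB (ρB x a) = [sA x, iB a]`, `iM (ρM x m) = ρ̂(sA x)(iM m)`. -/
def InducedCocycle {Ah Vh : Type u} [AddCommGroup Ah] [Module K Ah]
    [AddCommGroup Vh] [Module K Vh]
    {𝒜 : RelRB K A V} {ℬ : RelRB K B M} {ℰ : RelRB K Ah Vh}
    (E : ExtData K 𝒜 ℬ ℰ) (sA : A →ₗ[K] Ah) (sV : V →ₗ[K] Vh)
    (ω : A → A → B) (ϖ : A → V → M) (χ : V → B)
    (μ : V → B → M) (ρB : A → B → B) (ρM : A → M → M) : Prop :=
  (∀ x y, E.iB (ω x y) = ℰ.br (sA x) (sA y) - sA (𝒜.br x y)) ∧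
  (∀ x v, E.iM (ϖ x v) = ℰ.rep (sA x) (sV v) - sV (𝒜.rep x v)) ∧
  (∀ v, E.iB (χ v) = ℰ.T (sV v) - sA (𝒜.T v)) ∧
  (∀ v a, E.iM (μ v a) = - ℰ.rep (E.iB a) (sV v)) ∧
  (∀ x a, E.iB (ρB x a) = ℰ.br (sA x) (E.iB a)) ∧
  (∀ x m, E.iM (ρM x m) = ℰ.rep (sA x) (E.iM m))
/-- Automorphism conditions for a pair of plain maps. -/
def IsAutFun (𝒜 : RelRB K A V) (f : A → A) (g : V → V) : Prop :=
  Function.Bijective f ∧ Function.Bijective g ∧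
  (∀ x y, f (𝒜.br x y) = 𝒜.br (f x) (f y)) ∧
  (∀ v, f (𝒜.T v) = 𝒜.T (g v)) ∧
  (∀ x v, g (𝒜.rep x v) = 𝒜.rep (f x) (g v))
/-- Inducibility of a pair `(α, β)` of automorphisms with respect to a non-abelian
extension: there is an automorphism `γ` of `ℰ` restricting to `β` on `ℬ` and projecting
to `α` on `𝒜`. -/
def Inducible {Ah Vh : Type u} [AddCommGroup Ah] [Module K Ah]
    [AddCommGroup Vh] [Module K Vh]
    {𝒜 : RelRB K A V} {ℬ : RelRB K B M} {ℰ : RelRB K Ah Vh}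
    (E : ExtData K 𝒜 ℬ ℰ) (sA : A →ₗ[K] Ah) (sV : V →ₗ[K] Vh)
    (α₁ : A → A) (α₂ : V → V) (β₁ : B → B) (β₂ : M → M) : Prop :=
  ∃ (γ₁ : Ah ≃ₗ[K] Ah) (γ₂ : Vh ≃ₗ[K] Vh),
    (∀ x y, γ₁ (ℰ.br x y) = ℰ.br (γ₁ x) (γ₁ y)) ∧
    (∀ v, γ₁ (ℰ.T v) = ℰ.T (γ₂ v)) ∧
    (∀ x v, γ₂ (ℰ.rep x v) = ℰ.rep (γ₁ x) (γ₂ v)) ∧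
    (∀ a, γ₁ (E.iB a) = E.iB (β₁ a)) ∧
    (∀ m, γ₂ (E.iM m) = E.iM (β₂ m)) ∧
    (∀ x, E.pA (γ₁ (sA x)) = α₁ x) ∧
    (∀ v, E.pV (γ₂ (sV v)) = α₂ v)
/-- Auxiliary: a linear retraction for the injection of an extension with a section. -/
private lemma exists_retraction {X Y Z : Type u} [AddCommGroup X] [Module K X]
    [AddCommGroup Y] [Module K Y] [AddCommGroup Z] [Module K Z]
    (i : X →ₗ[K] Y) (p : Y →ₗ[K] Z) (s : Z →ₗ[K] Y)
    (hi : Function.Injective i) (hex : ∀ y, p y = 0 ↔ y ∈ Set.range i)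
    (hs : ∀ z, p (s z) = z) :
    ∃ r : Y →ₗ[K] X, ∀ y, i (r y) = y - s (p y) := by
  have hmem : ∀ y : Y, y - s (p y) ∈ LinearMap.range i := by
    intro y
    rcases (hex (y - s (p y))).1 (by simp [hs]) with ⟨x, hx⟩
    exact ⟨x, hx⟩
  refine ⟨(LinearEquiv.ofInjective i hi).symm.toLinearMap ∘ₗ
    LinearMap.codRestrict (LinearMap.range i) (LinearMap.id - s ∘ₗ p)
      (fun y => by simpa using hmem y), fun y => ?_⟩
  simp only [LinearMap.comp_apply, LinearEquiv.coe_toLinearMap,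
    LinearEquiv.ofInjective_symm_apply, LinearMap.codRestrict_apply,
    LinearMap.sub_apply, LinearMap.id_apply]

/-- a pair `(α,β)` of automorphisms is inducible iff there exist linear
maps `ζ : A → B` and `η : V → M` satisfying the six compatibility equations with the
induced non-abelian 2-cocycle. -/
theorem inducible_iff_compatible_maps {Ah Vh : Type u}
    [AddCommGroup Ah] [Module K Ah] [AddCommGroup Vh] [Module K Vh]
    (𝒜 : RelRB K A V) (ℬ : RelRB K B M) (ℰ : RelRB K Ah Vh)
    (E : ExtData K 𝒜 ℬ ℰ)
    (sA : A →ₗ[K] Ah) (sV : V →ₗ[K] Vh)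
    (hsA : ∀ x, E.pA (sA x) = x) (hsV : ∀ v, E.pV (sV v) = v)
    (ω : A → A → B) (ϖ : A → V → M) (χ : V → B)
    (μ : V → B → M) (ρB : A → B → B) (ρM : A → M → M)
    (hcoc : InducedCocycle K E sA sV ω ϖ χ μ ρB ρM)
    (α₁ : A ≃ₗ[K] A) (α₂ : V ≃ₗ[K] V)
    (hα : IsAutFun K 𝒜 (fun x => α₁ x) (fun v => α₂ v))
    (β₁ : B ≃ₗ[K] B) (β₂ : M ≃ₗ[K] M)
    (hβ : IsAutFun K ℬ (fun a => β₁ a) (fun m => β₂ m)) :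
    Inducible K E sA sV (fun x => α₁ x) (fun v => α₂ v)
        (fun a => β₁ a) (fun m => β₂ m) ↔
      ∃ (ζ : A →ₗ[K] B) (η : V →ₗ[K] M),
        (∀ x y, β₁ (ω x y) - ω (α₁ x) (α₁ y)
            = ρB (α₁ x) (ζ y) - ρB (α₁ y) (ζ x) - ζ (𝒜.br x y) + ℬ.br (ζ x) (ζ y)) ∧
        (∀ x a, β₁ (ρB x a) - ρB (α₁ x) (β₁ a) = ℬ.br (ζ x) (β₁ a)) ∧
        (∀ x m, β₂ (ρM x m) - ρM (α₁ x) (β₂ m) = ℬ.rep (ζ x) (β₂ m)) ∧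
        (∀ v a, β₂ (μ v a) - μ (α₂ v) (β₁ a) = - ℬ.rep (β₁ a) (η v)) ∧
        (∀ x v, β₂ (ϖ x v) - ϖ (α₁ x) (α₂ v)
            = ℬ.rep (ζ x) (η v) - μ (α₂ v) (ζ x) + ρM (α₁ x) (η v) - η (𝒜.rep x v)) ∧
        (∀ v, β₁ (χ v) - χ (α₂ v) = ℬ.T (η v) - ζ (𝒜.T v)) := by

  obtain ⟨hω, hϖ, hχ, hμ, hρB, hρM⟩ := hcoc
  obtain ⟨-, -, hαbr0, hαT0, hαrep0⟩ := hα
  obtain ⟨-, -, hβbr0, hβT0, hβrep0⟩ := hβ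
  have hαbr : ∀ x y, α₁ (𝒜.br x y) = 𝒜.br (α₁ x) (α₁ y) := hαbr0
  have hαT : ∀ v, α₁ (𝒜.T v) = 𝒜.T (α₂ v) := hαT0
  have hαrep : ∀ x v, α₂ (𝒜.rep x v) = 𝒜.rep (α₁ x) (α₂ v) := hαrep0
  have hβbr : ∀ a b, β₁ (ℬ.br a b) = ℬ.br (β₁ a) (β₁ b) := hβbr0
  have hβT : ∀ m, β₁ (ℬ.T m) = ℬ.T (β₂ m) := hβT0
  have hβrep : ∀ a m, β₂ (ℬ.rep a m) = ℬ.rep (β₁ a) (β₂ m) := hβrep0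
  obtain ⟨rB, hrB⟩ := exists_retraction K E.iB E.pA sA E.iB_inj E.exactA hsA
  obtain ⟨rM, hrM⟩ := exists_retraction K E.iM E.pV sV E.iM_inj E.exactV hsV
  have pAiB : ∀ a, E.pA (E.iB a) = 0 := fun a => (E.exactA _).2 ⟨a, rfl⟩
  have pViM : ∀ m, E.pV (E.iM m) = 0 := fun m => (E.exactV _).2 ⟨m, rfl⟩
  have rBiB : ∀ a, rB (E.iB a) = a := fun a => E.iB_inj (by rw [hrB, pAiB]; simp)
  have rBsA : ∀ x, rB (sA x) = 0 := fun x => E.iB_inj (by rw [hrB, hsA]; simp)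
  have rMiM : ∀ m, rM (E.iM m) = m := fun m => E.iM_inj (by rw [hrM, pViM]; simp)
  have rMsV : ∀ v, rM (sV v) = 0 := fun v => E.iM_inj (by rw [hrM, hsV]; simp)
  have decompA : ∀ e : Ah, e = sA (E.pA e) + E.iB (rB e) := fun e => by rw [hrB]; abel
  have decompV : ∀ w : Vh, w = sV (E.pV w) + E.iM (rM w) := fun w => by rw [hrM]; abel
  have skewE : ∀ x y, ℰ.br x y = - ℰ.br y x := fun x y =>
    eq_neg_of_add_eq_zero_left (ℰ.skew x y)
  -- structure formulas for bracket / rep / T in terms of the decomposition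
  have hbr : ∀ p q b c, ℰ.br (sA p + E.iB b) (sA q + E.iB c)
      = sA (𝒜.br p q) + E.iB (ω p q + ρB p c - ρB q b + ℬ.br b c) := by
    intro p q b c
    have f1 : ℰ.br (sA p) (sA q) = E.iB (ω p q) + sA (𝒜.br p q) := by rw [hω]; abel
    have f2 : ℰ.br (sA p) (E.iB c) = E.iB (ρB p c) := (hρB p c).symm
    have f3 : ℰ.br (E.iB b) (sA q) = - E.iB (ρB q b) := by rw [skewE, hρB]
    have f4 : ℰ.br (E.iB b) (E.iB c) = E.iB (ℬ.br b c) := (E.iB_br b c).symm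
    simp only [map_add, map_sub, LinearMap.add_apply, f1, f2, f3, f4]
    abel
  have hrep : ∀ p b v m, ℰ.rep (sA p + E.iB b) (sV v + E.iM m)
      = sV (𝒜.rep p v) + E.iM (ϖ p v + ρM p m - μ v b + ℬ.rep b m) := by
    intro p b v m
    have f1 : ℰ.rep (sA p) (sV v) = E.iM (ϖ p v) + sV (𝒜.rep p v) := by rw [hϖ]; abel
    have f2 : ℰ.rep (sA p) (E.iM m) = E.iM (ρM p m) := (hρM p m).symm
    have f3 : ℰ.rep (E.iB b) (sV v) = - E.iM (μ v b) := by rw [hμ, neg_neg]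
    have f4 : ℰ.rep (E.iB b) (E.iM m) = E.iM (ℬ.rep b m) := (E.i_rep b m).symm
    simp only [map_add, map_sub, LinearMap.add_apply, f1, f2, f3, f4]
    abel
  have hTf : ∀ v m, ℰ.T (sV v + E.iM m) = sA (𝒜.T v) + E.iB (χ v + ℬ.T m) := by
    intro v m
    have f1 : ℰ.T (sV v) = E.iB (χ v) + sA (𝒜.T v) := by rw [hχ]; abel
    rw [map_add, ← E.iB_T, f1, map_add]
    abel
  constructor
  · rintro ⟨γ₁, γ₂, hγbr, hγT, hγrep, hγiB, hγiM, hγpA, hγpV⟩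
    set ζ : A →ₗ[K] B := rB ∘ₗ (γ₁ : Ah →ₗ[K] Ah) ∘ₗ sA with hζdef
    set η : V →ₗ[K] M := rM ∘ₗ (γ₂ : Vh →ₗ[K] Vh) ∘ₗ sV with hηdef
    have hγsA : ∀ x, γ₁ (sA x) = sA (α₁ x) + E.iB (ζ x) := by
      intro x
      have h := decompA (γ₁ (sA x))
      rw [hγpA x] at h
      exact h
    have hγsV : ∀ v, γ₂ (sV v) = sV (α₂ v) + E.iM (η v) := by
      intro v
      have h := decompV (γ₂ (sV v))
      rw [hγpV v] at h
      exact h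
    refine ⟨ζ, η, ?_, ?_, ?_, ?_, ?_, ?_⟩
    · -- equation (1)
      intro x y
      have h := hγbr (sA x) (sA y)
      have lhs : γ₁ (ℰ.br (sA x) (sA y))
          = sA (𝒜.br (α₁ x) (α₁ y)) + E.iB (β₁ (ω x y) + ζ (𝒜.br x y)) := by
        have f1 : ℰ.br (sA x) (sA y) = sA (𝒜.br x y) + E.iB (ω x y) := by rw [hω]; abel
        rw [f1, map_add, hγiB, hγsA, hαbr, map_add]
        abel
      have rhs : ℰ.br (γ₁ (sA x)) (γ₁ (sA y))
          = sA (𝒜.br (α₁ x) (α₁ y))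
            + E.iB (ω (α₁ x) (α₁ y) + ρB (α₁ x) (ζ y) - ρB (α₁ y) (ζ x)
              + ℬ.br (ζ x) (ζ y)) := by
        rw [hγsA, hγsA, hbr]
      rw [lhs, rhs] at h
      have h2 := E.iB_inj (add_left_cancel h)
      linear_combination (norm := abel) h2
    · -- equation (2)
      intro x a
      have h := hγbr (sA x) (E.iB a)
      have lhs : γ₁ (ℰ.br (sA x) (E.iB a)) = E.iB (β₁ (ρB x a)) := by
        rw [← hρB, hγiB]
      have rhs : ℰ.br (γ₁ (sA x)) (γ₁ (E.iB a))
          = E.iB (ρB (α₁ x) (β₁ a) + ℬ.br (ζ x) (β₁ a)) := by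
        rw [hγsA, hγiB, map_add, LinearMap.add_apply, ← hρB, ← E.iB_br, ← map_add]
      rw [lhs, rhs] at h
      have h2 := E.iB_inj h
      linear_combination (norm := abel) h2
    · -- equation (3)
      intro x m
      have h := hγrep (sA x) (E.iM m)
      have lhs : γ₂ (ℰ.rep (sA x) (E.iM m)) = E.iM (β₂ (ρM x m)) := by
        rw [← hρM, hγiM]
      have rhs : ℰ.rep (γ₁ (sA x)) (γ₂ (E.iM m))
          = E.iM (ρM (α₁ x) (β₂ m) + ℬ.rep (ζ x) (β₂ m)) := by
        rw [hγsA, hγiM, map_add, LinearMap.add_apply, ← hρM, ← E.i_rep, ← map_add]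
      rw [lhs, rhs] at h
      have h2 := E.iM_inj h
      linear_combination (norm := abel) h2
    · -- equation (4)
      intro v a
      have h := hγrep (E.iB a) (sV v)
      have lhs : γ₂ (ℰ.rep (E.iB a) (sV v)) = E.iM (- β₂ (μ v a)) := by
        have f3 : ℰ.rep (E.iB a) (sV v) = - E.iM (μ v a) := by rw [hμ, neg_neg]
        rw [f3, map_neg, hγiM, ← map_neg]
      have rhs : ℰ.rep (γ₁ (E.iB a)) (γ₂ (sV v))
          = E.iM (- μ (α₂ v) (β₁ a) + ℬ.rep (β₁ a) (η v)) := by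
        have f3 : ℰ.rep (E.iB (β₁ a)) (sV (α₂ v)) = - E.iM (μ (α₂ v) (β₁ a)) := by
          rw [hμ, neg_neg]
        rw [hγiB, hγsV, map_add, f3, ← E.i_rep, ← map_neg, ← map_add]
      rw [lhs, rhs] at h
      have h2 := E.iM_inj h
      linear_combination (norm := abel) -h2
    · -- equation (5)
      intro x v
      have h := hγrep (sA x) (sV v)
      have lhs : γ₂ (ℰ.rep (sA x) (sV v))
          = sV (𝒜.rep (α₁ x) (α₂ v)) + E.iM (β₂ (ϖ x v) + η (𝒜.rep x v)) := by
        have f1 : ℰ.rep (sA x) (sV v) = sV (𝒜.rep x v) + E.iM (ϖ x v) := by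
          rw [hϖ]; abel
        rw [f1, map_add, hγiM, hγsV, hαrep, map_add]
        abel
      have rhs : ℰ.rep (γ₁ (sA x)) (γ₂ (sV v))
          = sV (𝒜.rep (α₁ x) (α₂ v))
            + E.iM (ϖ (α₁ x) (α₂ v) + ρM (α₁ x) (η v) - μ (α₂ v) (ζ x)
              + ℬ.rep (ζ x) (η v)) := by
        rw [hγsA, hγsV, hrep]
      rw [lhs, rhs] at h
      have h2 := E.iM_inj (add_left_cancel h)
      linear_combination (norm := abel) h2
    · -- equation (6)
      intro v
      have h := hγT (sV v)
      have lhs : γ₁ (ℰ.T (sV v))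
          = sA (𝒜.T (α₂ v)) + E.iB (β₁ (χ v) + ζ (𝒜.T v)) := by
        have f1 : ℰ.T (sV v) = sA (𝒜.T v) + E.iB (χ v) := by rw [hχ]; abel
        rw [f1, map_add, hγiB, hγsA, hαT, map_add]
        abel
      have rhs : ℰ.T (γ₂ (sV v))
          = sA (𝒜.T (α₂ v)) + E.iB (χ (α₂ v) + ℬ.T (η v)) := by
        rw [hγsV, hTf]
      rw [lhs, rhs] at h
      have h2 := E.iB_inj (add_left_cancel h)
      linear_combination (norm := abel) h2
  · rintro ⟨ζ, η, e1, e2, e3, e4, e5, e6⟩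
    -- additivity of the nonlinear structure maps
    have ρBadd : ∀ x a a', ρB x (a + a') = ρB x a + ρB x a' := fun x a a' =>
      E.iB_inj (by simp only [hρB, map_add])
    have ρMadd : ∀ x m m', ρM x (m + m') = ρM x m + ρM x m' := fun x m m' =>
      E.iM_inj (by simp only [hρM, map_add])
    have μadd : ∀ v a a', μ v (a + a') = μ v a + μ v a' := fun v a a' =>
      E.iM_inj (by simp only [hμ, map_add, LinearMap.add_apply, neg_add])
    -- the candidate automorphism of ℰ and its inverse
    set g₁ : Ah →ₗ[K] Ah :=
      sA ∘ₗ (α₁ : A →ₗ[K] A) ∘ₗ E.pA + E.iB ∘ₗ (ζ ∘ₗ E.pA + (β₁ : B →ₗ[K] B) ∘ₗ rB)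
      with hg₁def
    set d₁ : Ah →ₗ[K] Ah :=
      sA ∘ₗ (α₁.symm : A →ₗ[K] A) ∘ₗ E.pA
        + E.iB ∘ₗ ((β₁.symm : B →ₗ[K] B) ∘ₗ
            (rB - ζ ∘ₗ (α₁.symm : A →ₗ[K] A) ∘ₗ E.pA)) with hd₁def
    set g₂ : Vh →ₗ[K] Vh :=
      sV ∘ₗ (α₂ : V →ₗ[K] V) ∘ₗ E.pV + E.iM ∘ₗ (η ∘ₗ E.pV + (β₂ : M →ₗ[K] M) ∘ₗ rM)
      with hg₂def
    set d₂ : Vh →ₗ[K] Vh :=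
      sV ∘ₗ (α₂.symm : V →ₗ[K] V) ∘ₗ E.pV
        + E.iM ∘ₗ ((β₂.symm : M →ₗ[K] M) ∘ₗ
            (rM - η ∘ₗ (α₂.symm : V →ₗ[K] V) ∘ₗ E.pV)) with hd₂def
    have hg₁ : ∀ e, g₁ e = sA (α₁ (E.pA e)) + E.iB (ζ (E.pA e) + β₁ (rB e)) :=
      fun e => rfl
    have hd₁ : ∀ e, d₁ e
        = sA (α₁.symm (E.pA e)) + E.iB (β₁.symm (rB e - ζ (α₁.symm (E.pA e)))) :=
      fun e => rfl
    have hg₂ : ∀ w, g₂ w = sV (α₂ (E.pV w)) + E.iM (η (E.pV w) + β₂ (rM w)) :=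
      fun w => rfl
    have hd₂ : ∀ w, d₂ w
        = sV (α₂.symm (E.pV w)) + E.iM (β₂.symm (rM w - η (α₂.symm (E.pV w)))) :=
      fun w => rfl
    have g₁form : ∀ u w, g₁ (sA u + E.iB w) = sA (α₁ u) + E.iB (ζ u + β₁ w) := by
      intro u w
      rw [hg₁]
      simp only [map_add, hsA, pAiB, add_zero, rBsA, rBiB, zero_add]
    have g₂form : ∀ u w, g₂ (sV u + E.iM w) = sV (α₂ u) + E.iM (η u + β₂ w) := by
      intro u w
      rw [hg₂]
      simp only [map_add, hsV, pViM, add_zero, rMsV, rMiM, zero_add]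
    have d₁form : ∀ u w, d₁ (sA u + E.iB w)
        = sA (α₁.symm u) + E.iB (β₁.symm (w - ζ (α₁.symm u))) := by
      intro u w
      rw [hd₁]
      simp only [map_add, hsA, pAiB, add_zero, rBsA, rBiB, zero_add]
    have d₂form : ∀ u w, d₂ (sV u + E.iM w)
        = sV (α₂.symm u) + E.iM (β₂.symm (w - η (α₂.symm u))) := by
      intro u w
      rw [hd₂]
      simp only [map_add, hsV, pViM, add_zero, rMsV, rMiM, zero_add]
    have hgd₁ : g₁ ∘ₗ d₁ = LinearMap.id := by
      ext e
      simp only [LinearMap.comp_apply, LinearMap.id_apply]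
      rw [hd₁, g₁form, LinearEquiv.apply_symm_apply, LinearEquiv.apply_symm_apply,
        show ζ (α₁.symm (E.pA e)) + (rB e - ζ (α₁.symm (E.pA e))) = rB e from by abel,
        ← decompA]
    have hdg₁ : d₁ ∘ₗ g₁ = LinearMap.id := by
      ext e
      simp only [LinearMap.comp_apply, LinearMap.id_apply]
      rw [hg₁, d₁form, LinearEquiv.symm_apply_apply,
        show ζ (E.pA e) + β₁ (rB e) - ζ (E.pA e) = β₁ (rB e) from by abel,
        LinearEquiv.symm_apply_apply, ← decompA]
    have hgd₂ : g₂ ∘ₗ d₂ = LinearMap.id := by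
      ext w
      simp only [LinearMap.comp_apply, LinearMap.id_apply]
      rw [hd₂, g₂form, LinearEquiv.apply_symm_apply, LinearEquiv.apply_symm_apply,
        show η (α₂.symm (E.pV w)) + (rM w - η (α₂.symm (E.pV w))) = rM w from by abel,
        ← decompV]
    have hdg₂ : d₂ ∘ₗ g₂ = LinearMap.id := by
      ext w
      simp only [LinearMap.comp_apply, LinearMap.id_apply]
      rw [hg₂, d₂form, LinearEquiv.symm_apply_apply,
        show η (E.pV w) + β₂ (rM w) - η (E.pV w) = β₂ (rM w) from by abel,
        LinearEquiv.symm_apply_apply, ← decompV]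
    refine ⟨LinearEquiv.ofLinear g₁ d₁ hgd₁ hdg₁, LinearEquiv.ofLinear g₂ d₂ hgd₂ hdg₂,
      ?_, ?_, ?_, ?_, ?_, ?_, ?_⟩
    · -- bracket compatibility
      intro x y
      simp only [LinearEquiv.ofLinear_apply]
      conv_lhs => rw [decompA x, decompA y]
      conv_rhs => rw [decompA x, decompA y]
      rw [hbr, g₁form, g₁form, g₁form, hbr, hαbr]
      congr 1
      apply congrArg
      simp only [map_add, map_sub, LinearMap.add_apply, hβbr, ρBadd]
      linear_combination (norm := abel) e1 (E.pA x) (E.pA y) + e2 (E.pA x) (rB y)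
        - e2 (E.pA y) (rB x) - ℬ.skew (ζ (E.pA y)) (β₁ (rB x))
    · -- T compatibility
      intro w
      simp only [LinearEquiv.ofLinear_apply]
      conv_lhs => rw [decompV w]
      conv_rhs => rw [decompV w]
      rw [hTf, g₁form, g₂form, hTf, hαT]
      congr 1
      apply congrArg
      simp only [map_add, hβT]
      linear_combination (norm := abel) e6 (E.pV w)
    · -- rep compatibility
      intro x w
      simp only [LinearEquiv.ofLinear_apply]
      conv_lhs => rw [decompA x, decompV w]
      conv_rhs => rw [decompA x, decompV w]
      rw [hrep, g₁form, g₂form, g₂form, hrep, hαrep]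
      congr 1
      apply congrArg
      simp only [map_add, map_sub, LinearMap.add_apply, hβrep, ρMadd, μadd]
      linear_combination (norm := abel) e5 (E.pA x) (E.pV w) + e3 (E.pA x) (rM w)
        - e4 (E.pV w) (rB x)
    · -- restriction to B
      intro a
      simp only [LinearEquiv.ofLinear_apply]
      rw [hg₁]
      simp only [pAiB, rBiB, map_zero, zero_add]
    · -- restriction to M
      intro m
      simp only [LinearEquiv.ofLinear_apply]
      rw [hg₂]
      simp only [pViM, rMiM, map_zero, zero_add]
    · -- projection to A
      intro x
      simp only [LinearEquiv.ofLinear_apply]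
      rw [hg₁]
      simp only [map_add, hsA, pAiB, add_zero]
    · -- projection to V
      intro v
      simp only [LinearEquiv.ofLinear_apply]
      rw [hg₂]
      simp only [map_add, hsV, pViM, add_zero]

end
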